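/- Let i_d, i_q, i_f, θ : ℝ → ℝ be differentiable functions, fix t ∈ ℝ and set ω = θ'(t), and form Δ_y at time t using θ = θ(t), i_d = i_d(t), i_q = i_q(t), i_f = i_f(t), di_d = i_d'(t), di_q = i_q'(t), di_f = i_f'(t). Set a(s) = Lδ·i_d(s) + M_f·i_f(s) and b(s) = L_Δ·i_q(s). If a(t) ≠ 0 and a(t)² + L_Δ·Lδ·i_q(t)² ≠ 0, then Δ_y ≠ 0 if and only if ω ≠ ((a(t)² + b(t)²)/(a(t)² + L_Δ·Lδ·i_q(t)²)) · (d/ds)|_{s=t} arctan(b(s)/a(s)); that is, local observability is guaranteed whenever the electrical speed differs from the (scaled) rotational velocity of the observability vector (a, b) in the rotor frame. -/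

import Mathlib

open Matrix Real

/-- The WRSM inductance matrix 𝔏(θ). -/
noncomputable def Lmat (Ld Lq Lf Mf θ : ℝ) : Matrix (Fin 3) (Fin 3) ℝ :=
  !![(Ld + Lq)/2 + (Ld - Lq)/2 * Real.cos (2*θ), (Ld - Lq)/2 * Real.sin (2*θ), Mf * Real.cos θ;
     (Ld - Lq)/2 * Real.sin (2*θ), (Ld + Lq)/2 - (Ld - Lq)/2 * Real.cos (2*θ), Mf * Real.sin θ;
     Mf * Real.cos θ, Mf * Real.sin θ, Lf]

/-- The first entrywise θ-derivative 𝔏'(θ). -/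
noncomputable def Lmat' (Ld Lq Mf θ : ℝ) : Matrix (Fin 3) (Fin 3) ℝ :=
  !![-2 * ((Ld - Lq)/2) * Real.sin (2*θ), 2 * ((Ld - Lq)/2) * Real.cos (2*θ), -Mf * Real.sin θ;
     2 * ((Ld - Lq)/2) * Real.cos (2*θ), 2 * ((Ld - Lq)/2) * Real.sin (2*θ), Mf * Real.cos θ;
     -Mf * Real.sin θ, Mf * Real.cos θ, 0]

/-- The second entrywise θ-derivative 𝔏''(θ). -/
noncomputable def Lmat'' (Ld Lq Mf θ : ℝ) : Matrix (Fin 3) (Fin 3) ℝ :=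
  !![-4 * ((Ld - Lq)/2) * Real.cos (2*θ), -4 * ((Ld - Lq)/2) * Real.sin (2*θ), -Mf * Real.cos θ;
     -4 * ((Ld - Lq)/2) * Real.sin (2*θ), 4 * ((Ld - Lq)/2) * Real.cos (2*θ), -Mf * Real.sin θ;
     -Mf * Real.cos θ, -Mf * Real.sin θ, 0]

/-- The Park rotation matrix P(θ). -/
noncomputable def Pmat (θ : ℝ) : Matrix (Fin 3) (Fin 3) ℝ :=
  !![Real.cos θ, -Real.sin θ, 0;
     Real.sin θ, Real.cos θ, 0;
     0, 0, 1]

/-- The entrywise θ-derivative P'(θ). -/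
noncomputable def Pmat' (θ : ℝ) : Matrix (Fin 3) (Fin 3) ℝ :=
  !![-Real.sin θ, -Real.cos θ, 0;
     Real.cos θ, -Real.sin θ, 0;
     0, 0, 0]

/-- The WRSM observability determinant Δ_y, built from the first two (stator) components
of c₁ = −𝔏(θ)⁻¹·𝔏'(θ)·I and c₂ = −𝔏(θ)⁻¹·(𝔏'(θ)·dI + ω·𝔏''(θ)·I), where
I = P(θ)·(i_d, i_q, i_f)ᵀ and dI = P(θ)·(di_d, di_q, di_f)ᵀ + ω·P'(θ)·(i_d, i_q, i_f)ᵀ. -/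
noncomputable def deltaY (Ld Lq Lf Mf θ ω i_d i_q i_f di_d di_q di_f : ℝ) : ℝ :=
  let I : Fin 3 → ℝ := Pmat θ *ᵥ ![i_d, i_q, i_f]
  let dI : Fin 3 → ℝ := Pmat θ *ᵥ ![di_d, di_q, di_f] + ω • (Pmat' θ *ᵥ ![i_d, i_q, i_f])
  let c₁ : Fin 3 → ℝ := -((Lmat Ld Lq Lf Mf θ)⁻¹ *ᵥ (Lmat' Ld Lq Mf θ *ᵥ I))
  let c₂ : Fin 3 → ℝ :=
    -((Lmat Ld Lq Lf Mf θ)⁻¹ *ᵥ (Lmat' Ld Lq Mf θ *ᵥ dI + ω • (Lmat'' Ld Lq Mf θ *ᵥ I)))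
  c₁ 0 * c₂ 1 - c₁ 1 * c₂ 0

/- ========================= auxiliary material ========================= -/

/-- The inductance matrix in the dq frame. -/
noncomputable def LdqM (Ld Lq Lf Mf : ℝ) : Matrix (Fin 3) (Fin 3) ℝ :=
  !![Ld, 0, Mf; 0, Lq, 0; Mf, 0, Lf]

/-- The inverse of the dq-frame inductance matrix. -/
noncomputable def LdqInvM (Ld Lq Lf Mf : ℝ) : Matrix (Fin 3) (Fin 3) ℝ :=
  !![Lf/(Ld*Lf - Mf^2), 0, -Mf/(Ld*Lf - Mf^2);
     0, 1/Lq, 0;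
     -Mf/(Ld*Lf - Mf^2), 0, Ld/(Ld*Lf - Mf^2)]

/-- Infinitesimal rotation generator. -/
noncomputable def Jmat : Matrix (Fin 3) (Fin 3) ℝ := !![0, -1, 0; 1, 0, 0; 0, 0, 0]

/-- dq frame version of 𝔏'. -/
noncomputable def CmatA (Ld Lq Mf : ℝ) : Matrix (Fin 3) (Fin 3) ℝ :=
  !![0, Ld - Lq, 0; Ld - Lq, 0, Mf; 0, Mf, 0]

/-- dq frame version of 𝔏''. -/
noncomputable def Cmat2 (Ld Lq Mf : ℝ) : Matrix (Fin 3) (Fin 3) ℝ :=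
  !![-2*(Ld - Lq), 0, -Mf; 0, 2*(Ld - Lq), 0; -Mf, 0, 0]

lemma Pmat_transpose (θ : ℝ) : (Pmat θ)ᵀ =
    !![Real.cos θ, Real.sin θ, 0;
       -Real.sin θ, Real.cos θ, 0;
       0, 0, 1] := by
  ext i j
  fin_cases i <;> fin_cases j <;> simp [Pmat]

lemma Pt_mul_P (θ : ℝ) : (Pmat θ)ᵀ * Pmat θ = 1 := by
  rw [Pmat_transpose]
  ext i j
  fin_cases i <;> fin_cases j <;>
    simp [Pmat, Matrix.mul_apply, Fin.sum_univ_three, Matrix.one_apply] <;>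
    nlinarith [Real.sin_sq_add_cos_sq θ]

lemma P_mul_Pt (θ : ℝ) : Pmat θ * (Pmat θ)ᵀ = 1 := by
  rw [Pmat_transpose]
  ext i j
  fin_cases i <;> fin_cases j <;>
    simp [Pmat, Matrix.mul_apply, Fin.sum_univ_three, Matrix.one_apply] <;>
    nlinarith [Real.sin_sq_add_cos_sq θ]

lemma Lmat_eq (Ld Lq Lf Mf θ : ℝ) :
    Lmat Ld Lq Lf Mf θ = Pmat θ * LdqM Ld Lq Lf Mf * (Pmat θ)ᵀ := by
  rw [Pmat_transpose]
  ext i j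
  fin_cases i <;> fin_cases j <;>
    simp [Lmat, Pmat, LdqM, Matrix.mul_apply, Fin.sum_univ_three,
      Real.cos_two_mul, Real.sin_two_mul, Matrix.vecHead, Matrix.vecTail] <;>
    first
      | ring1
      | linear_combination Lq * Real.sin_sq_add_cos_sq θ
      | linear_combination (-Lq) * Real.sin_sq_add_cos_sq θ
      | linear_combination Ld * Real.sin_sq_add_cos_sq θ
      | linear_combination (-Ld) * Real.sin_sq_add_cos_sq θ
      | linear_combination (Ld - Lq) * Real.sin_sq_add_cos_sq θ
      | linear_combination (Lq - Ld) * Real.sin_sq_add_cos_sq θ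
      | linear_combination (2*(Ld - Lq)) * Real.sin_sq_add_cos_sq θ
      | linear_combination (2*(Lq - Ld)) * Real.sin_sq_add_cos_sq θ
      | nlinarith [Real.sin_sq_add_cos_sq θ]

lemma Lmat'_eq (Ld Lq Mf θ : ℝ) :
    Lmat' Ld Lq Mf θ = Pmat θ * CmatA Ld Lq Mf * (Pmat θ)ᵀ := by
  rw [Pmat_transpose]
  ext i j
  fin_cases i <;> fin_cases j <;>
    simp [Lmat', Pmat, CmatA, Matrix.mul_apply, Fin.sum_univ_three,
      Real.cos_two_mul, Real.sin_two_mul, Matrix.vecHead, Matrix.vecTail] <;>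
    first
      | ring1
      | linear_combination Lq * Real.sin_sq_add_cos_sq θ
      | linear_combination (-Lq) * Real.sin_sq_add_cos_sq θ
      | linear_combination Ld * Real.sin_sq_add_cos_sq θ
      | linear_combination (-Ld) * Real.sin_sq_add_cos_sq θ
      | linear_combination (Ld - Lq) * Real.sin_sq_add_cos_sq θ
      | linear_combination (Lq - Ld) * Real.sin_sq_add_cos_sq θ
      | linear_combination (2*(Ld - Lq)) * Real.sin_sq_add_cos_sq θ
      | linear_combination (2*(Lq - Ld)) * Real.sin_sq_add_cos_sq θ
      | nlinarith [Real.sin_sq_add_cos_sq θ]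

lemma Lmat''_eq (Ld Lq Mf θ : ℝ) :
    Lmat'' Ld Lq Mf θ = Pmat θ * Cmat2 Ld Lq Mf * (Pmat θ)ᵀ := by
  rw [Pmat_transpose]
  ext i j
  fin_cases i <;> fin_cases j <;>
    simp [Lmat'', Pmat, Cmat2, Matrix.mul_apply, Fin.sum_univ_three,
      Real.cos_two_mul, Real.sin_two_mul, Matrix.vecHead, Matrix.vecTail] <;>
    first
      | ring1
      | linear_combination Lq * Real.sin_sq_add_cos_sq θ
      | linear_combination (-Lq) * Real.sin_sq_add_cos_sq θ
      | linear_combination Ld * Real.sin_sq_add_cos_sq θ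
      | linear_combination (-Ld) * Real.sin_sq_add_cos_sq θ
      | linear_combination (Ld - Lq) * Real.sin_sq_add_cos_sq θ
      | linear_combination (Lq - Ld) * Real.sin_sq_add_cos_sq θ
      | linear_combination (2*(Ld - Lq)) * Real.sin_sq_add_cos_sq θ
      | linear_combination (2*(Lq - Ld)) * Real.sin_sq_add_cos_sq θ
      | nlinarith [Real.sin_sq_add_cos_sq θ]

lemma Pmat'_eq (θ : ℝ) : Pmat' θ = Pmat θ * Jmat := by
  ext i j
  fin_cases i <;> fin_cases j <;>
    simp [Pmat', Pmat, Jmat, Matrix.mul_apply, Fin.sum_univ_three, Matrix.vecHead,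
      Matrix.vecTail]

lemma Ldq_mul_inv (Ld Lq Lf Mf : ℝ) (hLq : Lq ≠ 0) (hdet : Ld * Lf - Mf ^ 2 ≠ 0) :
    LdqM Ld Lq Lf Mf * LdqInvM Ld Lq Lf Mf = 1 := by
  ext i j
  fin_cases i <;> fin_cases j <;>
    simp [LdqM, LdqInvM, Matrix.mul_apply, Fin.sum_univ_three, Matrix.one_apply,
      Matrix.vecHead, Matrix.vecTail] <;>
    field_simp <;> ring

lemma conj_mulVec (θ : ℝ) (A : Matrix (Fin 3) (Fin 3) ℝ) (w : Fin 3 → ℝ) :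
    (Pmat θ * A * (Pmat θ)ᵀ) *ᵥ (Pmat θ *ᵥ w) = Pmat θ *ᵥ (A *ᵥ w) := by
  rw [mulVec_mulVec, Matrix.mul_assoc (Pmat θ * A), Pt_mul_P, Matrix.mul_one, ← mulVec_mulVec]

lemma crossP (θ : ℝ) (w v : Fin 3 → ℝ) :
    (Pmat θ *ᵥ w) 0 * (Pmat θ *ᵥ v) 1 - (Pmat θ *ᵥ w) 1 * (Pmat θ *ᵥ v) 0
      = w 0 * v 1 - w 1 * v 0 := by
  simp [Pmat, Matrix.mulVec, dotProduct, Fin.sum_univ_three]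
  linear_combination (w 0 * v 1 - w 1 * v 0) * Real.sin_sq_add_cos_sq θ

set_option maxHeartbeats 2000000 in
theorem deltaY_eq (Ld Lq Lf Mf : ℝ) (hLq : Lq ≠ 0) (hLf : Lf ≠ 0)
    (hdet : Ld * Lf - Mf ^ 2 ≠ 0) (θ ω i_d i_q i_f di_d di_q di_f : ℝ) :
    deltaY Ld Lq Lf Mf θ ω i_d i_q i_f di_d di_q di_f =
      (ω * (((Ld - Lq) * i_d + Mf * i_f) ^ 2 + (Ld - Lq - Mf ^ 2 / Lf) * (Ld - Lq) * i_q ^ 2)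
        - (((Ld - Lq) * i_d + Mf * i_f) * ((Ld - Lq - Mf ^ 2 / Lf) * di_q)
          - ((Ld - Lq - Mf ^ 2 / Lf) * i_q) * ((Ld - Lq) * di_d + Mf * di_f)))
        / (Lq * (Ld - Mf ^ 2 / Lf)) := by
  have hinv : (Lmat Ld Lq Lf Mf θ)⁻¹ = Pmat θ * LdqInvM Ld Lq Lf Mf * (Pmat θ)ᵀ := by
    apply inv_eq_right_inv
    rw [Lmat_eq]
    simp only [Matrix.mul_assoc]
    rw [← Matrix.mul_assoc ((Pmat θ)ᵀ) (Pmat θ), Pt_mul_P, Matrix.one_mul,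
      ← Matrix.mul_assoc (LdqM Ld Lq Lf Mf) (LdqInvM Ld Lq Lf Mf),
      Ldq_mul_inv Ld Lq Lf Mf hLq hdet, Matrix.one_mul, P_mul_Pt]
  have edI : Pmat θ *ᵥ ![di_d, di_q, di_f] + ω • (Pmat' θ *ᵥ ![i_d, i_q, i_f])
      = Pmat θ *ᵥ (![di_d, di_q, di_f] + ω • (Jmat *ᵥ ![i_d, i_q, i_f])) := by
    rw [Pmat'_eq, ← mulVec_mulVec, ← mulVec_smul (Pmat θ) ω (Jmat *ᵥ ![i_d, i_q, i_f]),
      ← mulVec_add]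
  have e1 : Lmat' Ld Lq Mf θ *ᵥ (Pmat θ *ᵥ ![i_d, i_q, i_f])
      = Pmat θ *ᵥ (CmatA Ld Lq Mf *ᵥ ![i_d, i_q, i_f]) := by
    rw [Lmat'_eq, conj_mulVec]
  have einner : Lmat' Ld Lq Mf θ *ᵥ
        (Pmat θ *ᵥ (![di_d, di_q, di_f] + ω • (Jmat *ᵥ ![i_d, i_q, i_f])))
        + ω • (Lmat'' Ld Lq Mf θ *ᵥ (Pmat θ *ᵥ ![i_d, i_q, i_f]))
      = Pmat θ *ᵥ (CmatA Ld Lq Mf *ᵥ (![di_d, di_q, di_f] + ω • (Jmat *ᵥ ![i_d, i_q, i_f]))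
        + ω • (Cmat2 Ld Lq Mf *ᵥ ![i_d, i_q, i_f])) := by
    rw [Lmat'_eq, Lmat''_eq, conj_mulVec, conj_mulVec,
      ← mulVec_smul (Pmat θ) ω (Cmat2 Ld Lq Mf *ᵥ ![i_d, i_q, i_f]), ← mulVec_add]
  simp only [deltaY]
  rw [hinv, edI, e1, einner, conj_mulVec, conj_mulVec]
  simp only [Pi.neg_apply, neg_mul_neg]
  rw [crossP]
  simp [LdqInvM, CmatA, Cmat2, Jmat, Matrix.mulVec, dotProduct, Fin.sum_univ_three,
    Matrix.vecHead, Matrix.vecTail]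
  field_simp
  ring

/- ========================= main theorem ========================= -/

/-- With time-varying currents and position, a(s) = Lδ·i_d(s) + M_f·i_f(s),
b(s) = L_Δ·i_q(s), if a(t) ≠ 0 and a(t)² + L_Δ·Lδ·i_q(t)² ≠ 0, then Δ_y ≠ 0 iff the electrical
speed differs from the (scaled) rotational velocity of the observability vector (a, b). -/
theorem wrsm_observability_condition (Ld Lq Lf Mf : ℝ) (hLf : Lf ≠ 0) (hLq : Lq ≠ 0)
    (hdet : Ld * Lf - Mf ^ 2 ≠ 0)
    (i_d i_q i_f θ : ℝ → ℝ)
    (hid : Differentiable ℝ i_d) (hiq : Differentiable ℝ i_q)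
    (hif : Differentiable ℝ i_f) (hθ : Differentiable ℝ θ) (t : ℝ)
    (a b : ℝ → ℝ)
    (ha : ∀ s, a s = (Ld - Lq) * i_d s + Mf * i_f s)
    (hb : ∀ s, b s = (Ld - Lq - Mf ^ 2 / Lf) * i_q s)
    (hat : a t ≠ 0)
    (hden : a t ^ 2 + (Ld - Lq - Mf ^ 2 / Lf) * (Ld - Lq) * i_q t ^ 2 ≠ 0) :
    deltaY Ld Lq Lf Mf (θ t) (deriv θ t) (i_d t) (i_q t) (i_f t)
        (deriv i_d t) (deriv i_q t) (deriv i_f t) ≠ 0 ↔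
      deriv θ t ≠
        (a t ^ 2 + b t ^ 2) / (a t ^ 2 + (Ld - Lq - Mf ^ 2 / Lf) * (Ld - Lq) * i_q t ^ 2) *
          deriv (fun s => Real.arctan (b s / a s)) t := by
  have hLD : Ld - Mf ^ 2 / Lf ≠ 0 := by
    have h : Ld - Mf ^ 2 / Lf = (Ld * Lf - Mf ^ 2) / Lf := by field_simp
    rw [h]
    exact div_ne_zero hdet hLf
  have hLqLD : Lq * (Ld - Mf ^ 2 / Lf) ≠ 0 := mul_ne_zero hLq hLD
  have ha2 : 0 < a t ^ 2 := lt_of_le_of_ne (sq_nonneg _) (Ne.symm (pow_ne_zero 2 hat))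
  have hab : a t ^ 2 + b t ^ 2 ≠ 0 := ne_of_gt (by nlinarith [sq_nonneg (b t)])
  have hA : HasDerivAt a ((Ld - Lq) * deriv i_d t + Mf * deriv i_f t) t := by
    have hfa : a = fun s => (Ld - Lq) * i_d s + Mf * i_f s := funext ha
    rw [hfa]
    exact (((hid t).hasDerivAt).const_mul (Ld - Lq)).add (((hif t).hasDerivAt).const_mul Mf)
  have hB : HasDerivAt b ((Ld - Lq - Mf ^ 2 / Lf) * deriv i_q t) t := by
    have hfb : b = fun s => (Ld - Lq - Mf ^ 2 / Lf) * i_q s := funext hb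
    rw [hfb]
    exact ((hiq t).hasDerivAt).const_mul _
  have hq : HasDerivAt (fun s => b s / a s)
      ((((Ld - Lq - Mf ^ 2 / Lf) * deriv i_q t) * a t
        - b t * ((Ld - Lq) * deriv i_d t + Mf * deriv i_f t)) / a t ^ 2) t := hB.div hA hat
  have harc : HasDerivAt (fun s => Real.arctan (b s / a s))
      (1 / (1 + (b t / a t) ^ 2) *
        ((((Ld - Lq - Mf ^ 2 / Lf) * deriv i_q t) * a t
          - b t * ((Ld - Lq) * deriv i_d t + Mf * deriv i_f t)) / a t ^ 2)) t := by
    have h := (Real.hasDerivAt_arctan (b t / a t)).comp t hq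
    simpa [Function.comp_def] using h
  have hder : deriv (fun s => Real.arctan (b s / a s)) t
      = ((Ld - Lq - Mf ^ 2 / Lf) * deriv i_q t * a t
          - b t * ((Ld - Lq) * deriv i_d t + Mf * deriv i_f t)) / (a t ^ 2 + b t ^ 2) := by
    rw [harc.deriv]
    field_simp
  have hRHS : (a t ^ 2 + b t ^ 2) / (a t ^ 2 + (Ld - Lq - Mf ^ 2 / Lf) * (Ld - Lq) * i_q t ^ 2) *
      deriv (fun s => Real.arctan (b s / a s)) t
      = ((Ld - Lq - Mf ^ 2 / Lf) * deriv i_q t * a t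
          - b t * ((Ld - Lq) * deriv i_d t + Mf * deriv i_f t))
        / (a t ^ 2 + (Ld - Lq - Mf ^ 2 / Lf) * (Ld - Lq) * i_q t ^ 2) := by
    have cancel : ∀ X Y N : ℝ, Y ≠ 0 → X ≠ 0 → X / Y * (N / X) = N / Y := by
      intro X Y N hY hX
      field_simp
    rw [hder]
    exact cancel _ _ _ hden hab
  rw [deltaY_eq Ld Lq Lf Mf hLq hLf hdet, hRHS, ← ha t, ← hb t]
  constructor
  · intro h hcon
    apply h
    rw [hcon, div_eq_zero_iff]
    left
    rw [div_mul_cancel₀ _ hden]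
    ring
  · intro h hcon
    apply h
    have h0 : deriv θ t *
          (a t ^ 2 + (Ld - Lq - Mf ^ 2 / Lf) * (Ld - Lq) * i_q t ^ 2)
        - (a t * ((Ld - Lq - Mf ^ 2 / Lf) * deriv i_q t)
          - b t * ((Ld - Lq) * deriv i_d t + Mf * deriv i_f t)) = 0 := by
      rcases div_eq_zero_iff.mp hcon with h0 | h0
      · exact h0
      · exact absurd h0 hLqLD
    rw [eq_div_iff hden]
    linear_combination h0
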